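/- Consider the interconnection of the plant with the ℓ1-controller. Let μ = 2λ_min(R + λĤᵀQĤ) > 0 and L = 2λ_max(R + λĤᵀQĤ), and assume η ∈ (0, 2μ/L²). Then for every k ≥ 0, ‖u_{k+1} − u_{k+1}*‖ ≤ α·‖u_k − u_k*‖ + η·(L_T^y·‖C‖/√(λ_min(P)))·‖x_k − x_{ss,k}‖_P + η·L_T^y·‖H − Ĥ‖·‖u_k‖ + ‖u_{k+1}* − u_k*‖, where α = √(1 − η(2μ − ηL²)) ∈ [0,1) and L_T^y = 2λ‖ĤᵀQ‖. -/

import Mathlib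

open Matrix BigOperators

/-- Euclidean norm of a vector in `ℝ^a`. -/
noncomputable def enorm {a : ℕ} (x : Fin a → ℝ) : ℝ := Real.sqrt (∑ i, x i ^ 2)

/-- Spectral (ℓ2-operator) norm of a matrix. -/
noncomputable def spec {a b : ℕ} (M : Matrix (Fin a) (Fin b) ℝ) : ℝ :=
  ‖LinearMap.toContinuousLinearMap (Matrix.toEuclideanLin M)‖

/-- Largest eigenvalue of a symmetric matrix (Rayleigh quotient over the unit sphere). -/
noncomputable def eigMax {a : ℕ} (P : Matrix (Fin a) (Fin a) ℝ) : ℝ :=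
  sSup {r : ℝ | ∃ x : Fin a → ℝ, ∑ i, x i ^ 2 = 1 ∧ r = x ⬝ᵥ P *ᵥ x}

/-- Smallest eigenvalue of a symmetric matrix (Rayleigh quotient over the unit sphere). -/
noncomputable def eigMin {a : ℕ} (P : Matrix (Fin a) (Fin a) ℝ) : ℝ :=
  sInf {r : ℝ | ∃ x : Fin a → ℝ, ∑ i, x i ^ 2 = 1 ∧ r = x ⬝ᵥ P *ᵥ x}

/-- The `P`-weighted norm `‖x‖_P = √(xᵀ P x)`. -/
noncomputable def pnorm {a : ℕ} (P : Matrix (Fin a) (Fin a) ℝ) (x : Fin a → ℝ) : ℝ :=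
  Real.sqrt (x ⬝ᵥ P *ᵥ x)

/-- Soft-thresholding: the proximal operator of `v ↦ η ρᵀ|v|`. -/
noncomputable def softThreshold {a : ℕ} (η : ℝ) (ρ : Fin a → ℝ) (v : Fin a → ℝ) :
    Fin a → ℝ :=
  fun i => Real.sign (v i) * max (|v i| - η * ρ i) 0

/-- The ℓ1-regularized objective
`Φ_{ℓ1,k}(v) = vᵀRv + λ(Ĥv + d − r)ᵀQ(Ĥv + d − r) + ∑ i, ρ_i |v_i|`. -/
noncomputable def Phi1 {m p : ℕ} (R : Matrix (Fin m) (Fin m) ℝ) (Q : Matrix (Fin p) (Fin p) ℝ)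
    (lam : ℝ) (ρcol : Fin m → ℝ) (Hhat : Matrix (Fin p) (Fin m) ℝ) (d rk : Fin p → ℝ)
    (v : Fin m → ℝ) : ℝ :=
  v ⬝ᵥ R *ᵥ v + lam * ((Hhat *ᵥ v + d - rk) ⬝ᵥ Q *ᵥ (Hhat *ᵥ v + d - rk))
    + ∑ i, ρcol i * |v i|

/-!
The minimizer `u*_k` of `Φ_{ℓ1,k}` is a fixed point of the proximal-gradient map, and
soft-thresholding is nonexpansive, so `‖u_{k+1} - u*_k‖` is at most the distance between the two
gradient steps. That difference is the gradient step `δ ↦ δ - 2η(R + λĤᵀQĤ)δ` of the strongly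
convex quadratic part, a contraction with factor `α`, plus `2ηλĤᵀQ` applied to the mismatch
`y_k - Ĥu_k - d_k = C(x_k - x_ss,k) + (H - Ĥ)u_k` between output and model prediction. The
triangle inequality through `u*_k` adds the drift `‖u*_{k+1} - u*_k‖`.
-/

lemma enorm_eq_norm_toLp {a : ℕ} (x : Fin a → ℝ) :
    _root_.enorm x = ‖(WithLp.toLp 2 x : EuclideanSpace ℝ (Fin a))‖ := by
  simp [_root_.enorm, EuclideanSpace.norm_eq, sq_abs]

lemma enorm_eq_sqrt_dotProduct {a : ℕ} (x : Fin a → ℝ) : _root_.enorm x = √(x ⬝ᵥ x) := by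
  simp [_root_.enorm, dotProduct, sq]

lemma enorm_mulVec_le {a b : ℕ} (M : Matrix (Fin a) (Fin b) ℝ) (x : Fin b → ℝ) :
    _root_.enorm (M *ᵥ x) ≤ spec M * _root_.enorm x := by
  simpa [enorm_eq_norm_toLp, spec] using
    (LinearMap.toContinuousLinearMap (Matrix.toEuclideanLin M)).le_opNorm (WithLp.toLp 2 x)

section DotProductSelf

variable {ι R : Type*} [Fintype ι] [Ring R] [LinearOrder R] [IsStrictOrderedRing R]

lemma dotProduct_self_nonneg (v : ι → R) : 0 ≤ v ⬝ᵥ v :=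
  Finset.sum_nonneg fun i _ => mul_self_nonneg (v i)

lemma dotProduct_self_pos {v : ι → R} (hv : v ≠ 0) : 0 < v ⬝ᵥ v :=
  (dotProduct_self_nonneg v).lt_of_ne' (dotProduct_self_eq_zero.not.mpr hv)

end DotProductSelf

def rayleighValues {a : ℕ} (M : Matrix (Fin a) (Fin a) ℝ) : Set ℝ :=
  {r : ℝ | ∃ x : Fin a → ℝ, ∑ i, x i ^ 2 = 1 ∧ r = x ⬝ᵥ M *ᵥ x}

lemma rayleighValues_eq_image_sphere {a : ℕ} (M : Matrix (Fin a) (Fin a) ℝ) :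
    rayleighValues M = (fun x : EuclideanSpace ℝ (Fin a) => x.ofLp ⬝ᵥ M *ᵥ x.ofLp) ''
      Metric.sphere 0 1 := by
  ext r
  simp only [rayleighValues, Set.mem_ofPred_eq, Set.mem_image, mem_sphere_zero_iff_norm,
    EuclideanSpace.norm_eq, Real.norm_eq_abs, sq_abs, Real.sqrt_eq_one]
  constructor
  · rintro ⟨x, hx, rfl⟩
    exact ⟨WithLp.toLp 2 x, hx, rfl⟩
  · rintro ⟨x, hx, rfl⟩
    exact ⟨x.ofLp, hx, rfl⟩

lemma isCompact_rayleighValues {a : ℕ} (M : Matrix (Fin a) (Fin a) ℝ) :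
    IsCompact (rayleighValues M) := by
  rw [rayleighValues_eq_image_sphere]
  exact (isCompact_sphere 0 1).image (by unfold dotProduct mulVec; fun_prop)

lemma div_dotProduct_self_mem_rayleighValues {a : ℕ} (M : Matrix (Fin a) (Fin a) ℝ)
    {x : Fin a → ℝ} (hx : x ≠ 0) : (x ⬝ᵥ M *ᵥ x) / (x ⬝ᵥ x) ∈ rayleighValues M := by
  have hpos := dotProduct_self_pos hx
  refine ⟨(√(x ⬝ᵥ x))⁻¹ • x, ?_, ?_⟩
  · simp only [Pi.smul_apply, smul_eq_mul, mul_pow, ← Finset.mul_sum, inv_pow,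
      Real.sq_sqrt hpos.le]
    simpa [dotProduct, sq] using inv_mul_cancel₀ hpos.ne'
  · rw [mulVec_smul, dotProduct_smul, smul_dotProduct, smul_eq_mul, smul_eq_mul, ← mul_assoc,
      ← mul_inv, Real.mul_self_sqrt hpos.le, div_eq_inv_mul]

lemma dotProduct_mulVec_le_eigMax_mul {a : ℕ} (M : Matrix (Fin a) (Fin a) ℝ) (x : Fin a → ℝ) :
    x ⬝ᵥ M *ᵥ x ≤ eigMax M * (x ⬝ᵥ x) := by
  rcases eq_or_ne x 0 with rfl | hx
  · simp
  have hpos := dotProduct_self_pos hx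
  rw [← div_le_iff₀ hpos]
  exact le_csSup (isCompact_rayleighValues M).bddAbove
    (div_dotProduct_self_mem_rayleighValues M hx)

lemma eigMin_mul_le_dotProduct_mulVec {a : ℕ} (M : Matrix (Fin a) (Fin a) ℝ) (x : Fin a → ℝ) :
    eigMin M * (x ⬝ᵥ x) ≤ x ⬝ᵥ M *ᵥ x := by
  rcases eq_or_ne x 0 with rfl | hx
  · simp
  have hpos := dotProduct_self_pos hx
  rw [← le_div_iff₀ hpos]
  exact csInf_le (isCompact_rayleighValues M).bddBelow
    (div_dotProduct_self_mem_rayleighValues M hx)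

lemma eigMin_pos_of_posDef {a : ℕ} {P : Matrix (Fin a) (Fin a) ℝ} (hP : P.PosDef)
    (hne : (rayleighValues P).Nonempty) : 0 < eigMin P := by
  obtain ⟨x, hx, hmin⟩ := (isCompact_rayleighValues P).sInf_mem hne
  have hx0 : x ≠ 0 := by rintro rfl; simp at hx
  change 0 < sInf (rayleighValues P)
  rw [hmin]
  simpa using hP.dotProduct_mulVec_pos hx0

lemma enorm_le_pnorm_div_sqrt_eigMin {a : ℕ} {P : Matrix (Fin a) (Fin a) ℝ} (hP : P.PosDef)
    (z : Fin a → ℝ) : _root_.enorm z ≤ pnorm P z / √(eigMin P) := by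
  rcases eq_or_ne z 0 with rfl | hz
  · simp [_root_.enorm, pnorm]
  have hpos := eigMin_pos_of_posDef hP ⟨_, div_dotProduct_self_mem_rayleighValues P hz⟩
  rw [enorm_eq_sqrt_dotProduct, pnorm, ← Real.sqrt_div' _ hpos.le]
  exact Real.sqrt_le_sqrt ((le_div_iff₀' hpos).2 (eigMin_mul_le_dotProduct_mulVec P z))

lemma sq_dotProduct_mulVec_le {ι : Type*} [Fintype ι] {M : Matrix ι ι ℝ} (hM : M.PosSemidef)
    (x y : ι → ℝ) : (x ⬝ᵥ M *ᵥ y) ^ 2 ≤ (x ⬝ᵥ M *ᵥ x) * (y ⬝ᵥ M *ᵥ y) := by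
  let := M.toSeminormedAddCommGroup hM
  let := M.toInnerProductSpace hM
  have h : inner ℝ x y * inner ℝ x y ≤ inner ℝ x x * inner ℝ y y :=
    real_inner_mul_inner_self_le x y
  change (M *ᵥ y) ⬝ᵥ star x * ((M *ᵥ y) ⬝ᵥ star x)
    ≤ (M *ᵥ x) ⬝ᵥ star x * ((M *ᵥ y) ⬝ᵥ star y) at h
  simpa only [star_trivial, dotProduct_comm (M *ᵥ _), sq] using h

lemma dotProduct_mulVec_eq_mulVec_dotProduct {ι : Type*} [Fintype ι] {M : Matrix ι ι ℝ}
    (hM : Mᵀ = M) (x y : ι → ℝ) : x ⬝ᵥ M *ᵥ y = (M *ᵥ x) ⬝ᵥ y := by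
  rw [dotProduct_mulVec, ← mulVec_transpose, hM]

lemma mulVec_dotProduct_mulVec_le {a : ℕ} {M : Matrix (Fin a) (Fin a) ℝ} (hM : M.PosSemidef)
    (x : Fin a → ℝ) : (M *ᵥ x) ⬝ᵥ (M *ᵥ x) ≤ eigMax M ^ 2 * (x ⬝ᵥ x) := by
  set y := M *ᵥ x
  have hsymm : Mᵀ = M := (isHermitian_iff_isSymm.mp hM.isHermitian).eq
  have hnonneg : ∀ v, 0 ≤ v ⬝ᵥ M *ᵥ v := by simpa using hM.dotProduct_mulVec_nonneg
  have hxy : x ⬝ᵥ M *ᵥ y = y ⬝ᵥ y := dotProduct_mulVec_eq_mulVec_dotProduct hsymm x y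
  have hx := dotProduct_mulVec_le_eigMax_mul M x
  have hy := dotProduct_mulVec_le_eigMax_mul M y
  have hcs : (y ⬝ᵥ y) * (y ⬝ᵥ y) ≤ (eigMax M ^ 2 * (x ⬝ᵥ x)) * (y ⬝ᵥ y) :=
    calc (y ⬝ᵥ y) * (y ⬝ᵥ y) = (x ⬝ᵥ M *ᵥ y) ^ 2 := by rw [hxy, sq]
      _ ≤ (x ⬝ᵥ M *ᵥ x) * (y ⬝ᵥ M *ᵥ y) := sq_dotProduct_mulVec_le hM x y
      _ ≤ (eigMax M * (x ⬝ᵥ x)) * (eigMax M * (y ⬝ᵥ y)) :=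
        mul_le_mul hx hy (hnonneg y) ((hnonneg x).trans hx)
      _ = (eigMax M ^ 2 * (x ⬝ᵥ x)) * (y ⬝ᵥ y) := by ring
  rcases (dotProduct_self_nonneg y).eq_or_lt with hy0 | hy0
  · rw [← hy0]
    exact mul_nonneg (sq_nonneg _) (dotProduct_self_nonneg x)
  · exact le_of_mul_le_mul_right hcs hy0

lemma enorm_sub_smul_mulVec_le {a : ℕ} {M : Matrix (Fin a) (Fin a) ℝ} (hM : M.PosSemidef)
    {c : ℝ} (hc : 0 ≤ c) (x : Fin a → ℝ) :
    _root_.enorm (x - c • M *ᵥ x)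
      ≤ √(1 - 2 * c * eigMin M + c ^ 2 * eigMax M ^ 2) * _root_.enorm x := by
  rw [enorm_eq_sqrt_dotProduct, enorm_eq_sqrt_dotProduct,
    ← Real.sqrt_mul' _ (dotProduct_self_nonneg x)]
  apply Real.sqrt_le_sqrt
  have hsymm : Mᵀ = M := (isHermitian_iff_isSymm.mp hM.isHermitian).eq
  have hexpand : (x - c • M *ᵥ x) ⬝ᵥ (x - c • M *ᵥ x)
      = x ⬝ᵥ x - 2 * c * (x ⬝ᵥ M *ᵥ x) + c ^ 2 * ((M *ᵥ x) ⬝ᵥ (M *ᵥ x)) := by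
    rw [dotProduct_mulVec_eq_mulVec_dotProduct hsymm, dotProduct_comm (M *ᵥ x) x]
    simp only [sub_dotProduct, dotProduct_sub, smul_dotProduct, dotProduct_smul, smul_eq_mul,
      dotProduct_comm (M *ᵥ x) x]
    ring
  have hmin := mul_le_mul_of_nonneg_left (eigMin_mul_le_dotProduct_mulVec M x)
    (by positivity : 0 ≤ 2 * c)
  have hmax := mul_le_mul_of_nonneg_left (mulVec_dotProduct_mulVec_le hM x) (sq_nonneg c)
  rw [hexpand]
  nlinarith

noncomputable def softThresholdReal (c v : ℝ) : ℝ := Real.sign v * max (|v| - c) 0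

lemma softThreshold_apply {a : ℕ} (η : ℝ) (ρ v : Fin a → ℝ) (i : Fin a) :
    softThreshold η ρ v i = softThresholdReal (η * ρ i) (v i) := rfl

/-- `softThresholdReal c` is the proximal map of `c |·|`: `v - softThresholdReal c v` is a
subgradient of `c |·|` at `softThresholdReal c v`. -/
lemma softThresholdReal_variational {c : ℝ} (hc : 0 ≤ c) (v z : ℝ) :
    (v - softThresholdReal c v) * (z - softThresholdReal c v)
      ≤ c * |z| - c * |softThresholdReal c v| := by
  unfold softThresholdReal
  rcases le_or_gt |v| c with hvc | hvc
  · rw [max_eq_right (by linarith)]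
    simp only [mul_zero, sub_zero, abs_zero]
    calc v * z ≤ |v| * |z| := by rw [← abs_mul]; exact le_abs_self _
      _ ≤ c * |z| := by gcongr
  rcases lt_or_ge v 0 with hv | hv
  · rw [abs_of_neg hv] at hvc ⊢
    rw [Real.sign_of_neg hv, max_eq_left (by linarith), neg_one_mul, abs_neg,
      abs_of_pos (show 0 < -v - c by linarith)]
    nlinarith [neg_abs_le z]
  · rw [abs_of_nonneg hv] at hvc ⊢
    rw [Real.sign_of_pos (by linarith), max_eq_left (by linarith), one_mul,
      abs_of_pos (show 0 < v - c by linarith)]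
    nlinarith [le_abs_self z]

lemma abs_softThresholdReal_sub_le {c : ℝ} (hc : 0 ≤ c) (v w : ℝ) :
    |softThresholdReal c v - softThresholdReal c w| ≤ |v - w| := by
  set s := softThresholdReal c v
  set t := softThresholdReal c w
  have hv := softThresholdReal_variational hc v t
  have hw := softThresholdReal_variational hc w s
  -- summing the two variational inequalities gives firm nonexpansiveness
  have hfirm : |s - t| ^ 2 ≤ |v - w| * |s - t| := by
    rw [sq_abs, ← abs_mul]
    exact (by nlinarith : (s - t) ^ 2 ≤ (v - w) * (s - t)).trans (le_abs_self _)
  nlinarith [abs_nonneg (s - t), abs_nonneg (v - w)]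

lemma softThreshold_variational {a : ℕ} {η : ℝ} (hη : 0 ≤ η) {ρ : Fin a → ℝ}
    (hρ : ∀ i, 0 ≤ ρ i) (v z : Fin a → ℝ) :
    (v - softThreshold η ρ v) ⬝ᵥ (z - softThreshold η ρ v)
      ≤ η * (∑ i, ρ i * |z i| - ∑ i, ρ i * |softThreshold η ρ v i|) := by
  rw [← Finset.sum_sub_distrib, Finset.mul_sum]
  refine Finset.sum_le_sum fun i _ => ?_
  simpa only [Pi.sub_apply, softThreshold_apply, mul_sub, mul_assoc]
    using softThresholdReal_variational (mul_nonneg hη (hρ i)) (v i) (z i)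

lemma enorm_softThreshold_sub_le {a : ℕ} {η : ℝ} (hη : 0 ≤ η) {ρ : Fin a → ℝ}
    (hρ : ∀ i, 0 ≤ ρ i) (v w : Fin a → ℝ) :
    _root_.enorm (softThreshold η ρ v - softThreshold η ρ w) ≤ _root_.enorm (v - w) := by
  refine Real.sqrt_le_sqrt (Finset.sum_le_sum fun i _ => ?_)
  simpa only [Pi.sub_apply, softThreshold_apply, sq_abs] using
    pow_le_pow_left₀ (abs_nonneg _)
      (abs_softThresholdReal_sub_le (mul_nonneg hη (hρ i)) (v i) (w i)) 2

lemma sum_mul_abs_add_smul_le {a : ℕ} {ρ : Fin a → ℝ} (hρ : ∀ i, 0 ≤ ρ i) (u δ : Fin a → ℝ)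
    {t : ℝ} (ht₀ : 0 ≤ t) (ht₁ : t ≤ 1) :
    ∑ i, ρ i * |(u + t • δ) i|
      ≤ (1 - t) * ∑ i, ρ i * |u i| + t * ∑ i, ρ i * |(u + δ) i| := by
  rw [Finset.mul_sum, Finset.mul_sum, ← Finset.sum_add_distrib]
  refine Finset.sum_le_sum fun i _ => ?_
  have hconv : |u i + t * δ i| ≤ (1 - t) * |u i| + t * |u i + δ i| :=
    calc |u i + t * δ i| = |(1 - t) * u i + t * (u i + δ i)| := by ring_nf
      _ ≤ |(1 - t) * u i| + |t * (u i + δ i)| := abs_add_le _ _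
      _ = (1 - t) * |u i| + t * |u i + δ i| := by
        rw [abs_mul, abs_mul, abs_of_nonneg (by linarith), abs_of_nonneg ht₀]
  simp only [Pi.add_apply, Pi.smul_apply, smul_eq_mul]
  nlinarith [hρ i]

lemma exists_mem_Ioc_mul_lt {a : ℝ} (ha : 0 < a) (b : ℝ) : ∃ t ∈ Set.Ioc (0 : ℝ) 1, t * b < a := by
  have hpos : 0 < a + |b| := by positivity
  refine ⟨a / (a + |b|), ⟨by positivity, (div_le_one hpos).2 (by linarith [abs_nonneg b])⟩, ?_⟩
  calc a / (a + |b|) * b ≤ a / (a + |b|) * |b| := by gcongr; exact le_abs_self b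
    _ < a := by rw [div_mul_eq_mul_div, div_lt_iff₀ hpos]; nlinarith

/-- Otherwise `w := softThreshold η ρ (u - (2 * η) • g)` satisfies the prox inequality, which
together with convexity of the weighted ℓ1 term makes `w - u` a descent direction of `F` at `u`. -/
theorem eq_softThreshold_of_forall_le {a : ℕ} {η : ℝ} (hη : 0 < η) {ρ : Fin a → ℝ}
    (hρ : ∀ i, 0 ≤ ρ i) {F : (Fin a → ℝ) → ℝ} {M : Matrix (Fin a) (Fin a) ℝ}
    {u g : Fin a → ℝ}
    (hF : ∀ δ, F (u + δ) = F u + 2 * (g ⬝ᵥ δ) + δ ⬝ᵥ M *ᵥ δ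
      + (∑ i, ρ i * |(u + δ) i| - ∑ i, ρ i * |u i|))
    (hmin : ∀ v, F u ≤ F v) :
    u = softThreshold η ρ (u - (2 * η) • g) := by
  set w := softThreshold η ρ (u - (2 * η) • g)
  by_contra hne
  set δ := w - u
  have hw : w = u + δ := by simp [δ]
  have hδ : 0 < δ ⬝ᵥ δ := dotProduct_self_pos (sub_ne_zero.mpr (Ne.symm hne))
  have hvar : δ ⬝ᵥ δ + 2 * η * (g ⬝ᵥ δ)
      ≤ η * (∑ i, ρ i * |u i| - ∑ i, ρ i * |w i|) := by
    have h := softThreshold_variational hη.le hρ (u - (2 * η) • g) u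
    rwa [show u - (2 * η) • g - w = -(δ + (2 * η) • g) by simp [δ]; abel,
      show u - w = -δ by simp [δ], neg_dotProduct_neg, add_dotProduct, smul_dotProduct,
      smul_eq_mul] at h
  have hdescent : 2 * (g ⬝ᵥ δ) + (∑ i, ρ i * |w i| - ∑ i, ρ i * |u i|) ≤ -(δ ⬝ᵥ δ / η) := by
    rw [neg_div', le_div_iff₀ hη]; nlinarith
  obtain ⟨t, ⟨ht₀, ht₁⟩, hsmall⟩ :=
    exists_mem_Ioc_mul_lt (div_pos hδ hη) (δ ⬝ᵥ M *ᵥ δ)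
  have hconv := sum_mul_abs_add_smul_le hρ u δ ht₀.le ht₁
  rw [← hw] at hconv
  have hstep := hF (t • δ)
  rw [mulVec_smul, dotProduct_smul, smul_dotProduct, dotProduct_smul] at hstep
  simp only [smul_eq_mul] at hstep
  have := hmin (u + t • δ)
  nlinarith [mul_le_mul_of_nonneg_left hdescent ht₀.le, mul_lt_mul_of_pos_left hsmall ht₀]

lemma Phi1_add {m p : ℕ} {R : Matrix (Fin m) (Fin m) ℝ} {Q : Matrix (Fin p) (Fin p) ℝ}
    (hR : Rᵀ = R) (hQ : Qᵀ = Q) (lam : ℝ) (ρ : Fin m → ℝ) (Hhat : Matrix (Fin p) (Fin m) ℝ)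
    (d rk : Fin p → ℝ) (u δ : Fin m → ℝ) :
    Phi1 R Q lam ρ Hhat d rk (u + δ) = Phi1 R Q lam ρ Hhat d rk u
      + 2 * ((R *ᵥ u + lam • (Hhatᵀ *ᵥ (Q *ᵥ (Hhat *ᵥ u + d - rk)))) ⬝ᵥ δ)
      + δ ⬝ᵥ (R + lam • (Hhatᵀ * Q * Hhat)) *ᵥ δ
      + (∑ i, ρ i * |(u + δ) i| - ∑ i, ρ i * |u i|) := by
  set b := Hhat *ᵥ u + d - rk
  have hb : Hhat *ᵥ (u + δ) + d - rk = b + Hhat *ᵥ δ := by simp only [b, mulVec_add]; abel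
  have hRcross : δ ⬝ᵥ R *ᵥ u = (R *ᵥ u) ⬝ᵥ δ := dotProduct_comm _ _
  have hRcross' : u ⬝ᵥ R *ᵥ δ = (R *ᵥ u) ⬝ᵥ δ := dotProduct_mulVec_eq_mulVec_dotProduct hR u δ
  have hQcross : b ⬝ᵥ Q *ᵥ (Hhat *ᵥ δ) = (Hhatᵀ *ᵥ (Q *ᵥ b)) ⬝ᵥ δ := by
    rw [dotProduct_comm _ δ, dotProduct_transpose_mulVec,
      dotProduct_mulVec_eq_mulVec_dotProduct hQ]
  have hQcross' : (Hhat *ᵥ δ) ⬝ᵥ Q *ᵥ b = (Hhatᵀ *ᵥ (Q *ᵥ b)) ⬝ᵥ δ := by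
    rw [← hQcross, dotProduct_mulVec_eq_mulVec_dotProduct hQ, dotProduct_comm]
  have hquad : δ ⬝ᵥ (Hhatᵀ * Q * Hhat) *ᵥ δ = (Hhat *ᵥ δ) ⬝ᵥ Q *ᵥ (Hhat *ᵥ δ) := by
    rw [← mulVec_mulVec, ← mulVec_mulVec, dotProduct_transpose_mulVec, dotProduct_comm]
  rw [Phi1, Phi1, hb]
  simp only [mulVec_add, add_mulVec, smul_mulVec, dotProduct_add, add_dotProduct,
    dotProduct_smul, smul_dotProduct, smul_eq_mul, hquad, hRcross, hRcross', hQcross, hQcross']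
  ring

theorem enorm_proxGrad_sub_le {m p : ℕ} {R : Matrix (Fin m) (Fin m) ℝ}
    {Q : Matrix (Fin p) (Fin p) ℝ} {lam : ℝ} {Hhat : Matrix (Fin p) (Fin m) ℝ}
    (hM : (R + lam • (Hhatᵀ * Q * Hhat)).PosSemidef) (hlam : 0 ≤ lam) {η : ℝ} (hη : 0 ≤ η)
    {ρ : Fin m → ℝ} (hρ : ∀ i, 0 ≤ ρ i) (u ustar : Fin m → ℝ) (y d rk : Fin p → ℝ) :
    _root_.enorm
        (softThreshold η ρ (u - (2 * η) • (R *ᵥ u + lam • (Hhatᵀ *ᵥ (Q *ᵥ (y - rk)))))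
          - softThreshold η ρ (ustar - (2 * η) •
              (R *ᵥ ustar + lam • (Hhatᵀ *ᵥ (Q *ᵥ (Hhat *ᵥ ustar + d - rk))))))
      ≤ √(1 - 2 * (2 * η) * eigMin (R + lam • (Hhatᵀ * Q * Hhat))
            + (2 * η) ^ 2 * eigMax (R + lam • (Hhatᵀ * Q * Hhat)) ^ 2)
          * _root_.enorm (u - ustar)
        + η * (2 * lam * spec (Hhatᵀ * Q)) * _root_.enorm (y - Hhat *ᵥ u - d) := by
  set M := R + lam • (Hhatᵀ * Q * Hhat)
  set δ := u - ustar
  set e := y - Hhat *ᵥ u - d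
  have hdiff : u - (2 * η) • (R *ᵥ u + lam • (Hhatᵀ *ᵥ (Q *ᵥ (y - rk))))
      - (ustar - (2 * η) • (R *ᵥ ustar + lam • (Hhatᵀ *ᵥ (Q *ᵥ (Hhat *ᵥ ustar + d - rk)))))
      = (δ - (2 * η) • M *ᵥ δ) - (2 * η * lam) • (Hhatᵀ * Q) *ᵥ e := by
    simp only [M, δ, e, add_mulVec, smul_mulVec, ← mulVec_mulVec, mulVec_sub, mulVec_add]
    module
  have htriangle : _root_.enorm ((δ - (2 * η) • M *ᵥ δ) - (2 * η * lam) • (Hhatᵀ * Q) *ᵥ e)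
      ≤ _root_.enorm (δ - (2 * η) • M *ᵥ δ) + _root_.enorm ((2 * η * lam) • (Hhatᵀ * Q) *ᵥ e) := by
    simpa only [enorm_eq_norm_toLp, WithLp.toLp_sub] using norm_sub_le _ _
  have hforcing : _root_.enorm ((2 * η * lam) • (Hhatᵀ * Q) *ᵥ e)
      ≤ η * (2 * lam * spec (Hhatᵀ * Q)) * _root_.enorm e :=
    calc _ = 2 * η * lam * _root_.enorm ((Hhatᵀ * Q) *ᵥ e) := by
          rw [enorm_eq_norm_toLp, enorm_eq_norm_toLp, WithLp.toLp_smul, norm_smul,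
            Real.norm_of_nonneg (by positivity)]
      _ ≤ 2 * η * lam * (spec (Hhatᵀ * Q) * _root_.enorm e) := by
          gcongr; exact enorm_mulVec_le _ e
      _ = _ := by ring
  calc _ ≤ _root_.enorm ((δ - (2 * η) • M *ᵥ δ) - (2 * η * lam) • (Hhatᵀ * Q) *ᵥ e) := by
        rw [← hdiff]; exact enorm_softThreshold_sub_le hη hρ _ _
    _ ≤ _ := htriangle.trans
        (add_le_add (enorm_sub_smul_mulVec_le hM (by positivity) δ) hforcing)

lemma sqrt_one_sub_mul_lt_one {η μ L : ℝ} (hη : 0 < η) (hηL : η < 2 * μ / L ^ 2) :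
    √(1 - η * (2 * μ - η * L ^ 2)) < 1 := by
  have hL : 0 < L ^ 2 := by
    refine (sq_nonneg L).lt_of_ne fun h => ?_
    rw [← h, div_zero] at hηL
    linarith
  have hgap : 0 < 2 * μ - η * L ^ 2 := by
    have := (lt_div_iff₀ hL).1 hηL
    linarith
  rw [Real.sqrt_lt' one_pos]
  nlinarith

lemma enorm_mulVec_add_mulVec_le {n m p : ℕ} {P : Matrix (Fin n) (Fin n) ℝ} (hP : P.PosDef)
    (C : Matrix (Fin p) (Fin n) ℝ) (D : Matrix (Fin p) (Fin m) ℝ) (z : Fin n → ℝ)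
    (w : Fin m → ℝ) :
    _root_.enorm (C *ᵥ z + D *ᵥ w)
      ≤ spec C * (pnorm P z / √(eigMin P)) + spec D * _root_.enorm w :=
  calc _ ≤ _root_.enorm (C *ᵥ z) + _root_.enorm (D *ᵥ w) := by
        simpa only [enorm_eq_norm_toLp, WithLp.toLp_add] using norm_add_le _ _
    _ ≤ _ := add_le_add ((enorm_mulVec_le C z).trans (mul_le_mul_of_nonneg_left
        (enorm_le_pnorm_div_sqrt_eigMin hP z) (norm_nonneg _))) (enorm_mulVec_le D w)

lemma output_sub_prediction_eq {n m p : ℕ} {G : Matrix (Fin n) (Fin n) ℝ}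
    {B : Matrix (Fin n) (Fin m) ℝ} {C : Matrix (Fin p) (Fin n) ℝ}
    {H Hhat : Matrix (Fin p) (Fin m) ℝ}
    {x xss dx : Fin n → ℝ} {u : Fin m → ℝ} {y dy : Fin p → ℝ}
    (hH : H = C * G * B) (hxss : xss = G *ᵥ (B *ᵥ u + dx)) (hy : y = C *ᵥ x + dy) :
    y - Hhat *ᵥ u - (C *ᵥ (G *ᵥ dx) + dy) = C *ᵥ (x - xss) + (H - Hhat) *ᵥ u := by
  subst hH hxss hy
  simp only [sub_mulVec, mulVec_add, mulVec_sub, ← mulVec_mulVec]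
  abel

theorem stmt12_general {n m p : ℕ}
    (A : Matrix (Fin n) (Fin n) ℝ) (B : Matrix (Fin n) (Fin m) ℝ) (C : Matrix (Fin p) (Fin n) ℝ)
    (P : Matrix (Fin n) (Fin n) ℝ) (hP : P.PosDef)
    (R : Matrix (Fin m) (Fin m) ℝ) (Q : Matrix (Fin p) (Fin p) ℝ)
    (hR : R.PosSemidef) (hQ : Q.PosSemidef)
    (lam : ℝ) (hlam : 0 ≤ lam) (Hhat : Matrix (Fin p) (Fin m) ℝ)
    (μ L : ℝ)
    (hμ : μ = 2 * eigMin (R + lam • (Hhatᵀ * Q * Hhat)))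
    (hL : L = 2 * eigMax (R + lam • (Hhatᵀ * Q * Hhat)))
    (r : ℕ → Fin p → ℝ) (η : ℝ) (hη : 0 < η) (hηrange : η < 2 * μ / L ^ 2)
    (ρcol : Fin m → ℝ) (hρcol : ∀ i, 0 ≤ ρcol i)
    (dx : ℕ → Fin n → ℝ) (dy : ℕ → Fin p → ℝ)
    (x : ℕ → Fin n → ℝ) (u : ℕ → Fin m → ℝ) (y : ℕ → Fin p → ℝ)
    (hout : ∀ k, y k = C *ᵥ x k + dy k)
    (hctrl : ∀ k, u (k + 1) =
      softThreshold η ρcol (u k - (2 * η) • (R *ᵥ u k + lam • (Hhatᵀ *ᵥ (Q *ᵥ (y k - r k))))))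
    (ustar : ℕ → Fin m → ℝ)
    (hustar : ∀ k, ∀ v : Fin m → ℝ, v ≠ ustar k →
      Phi1 R Q lam ρcol Hhat (C *ᵥ ((1 - A)⁻¹ *ᵥ dx k) + dy k) (r k) (ustar k)
        < Phi1 R Q lam ρcol Hhat (C *ᵥ ((1 - A)⁻¹ *ᵥ dx k) + dy k) (r k) v)
    (H : Matrix (Fin p) (Fin m) ℝ) (hH : H = C * (1 - A)⁻¹ * B)
    (xss : ℕ → Fin n → ℝ) (hxss : ∀ k, xss k = (1 - A)⁻¹ *ᵥ (B *ᵥ u k + dx k))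
    (α LTy : ℝ)
    (hα : α = Real.sqrt (1 - η * (2 * μ - η * L ^ 2)))
    (hLTy : LTy = 2 * lam * spec (Hhatᵀ * Q)) :
    (0 ≤ α ∧ α < 1) ∧
      ∀ k : ℕ,
        _root_.enorm (u (k + 1) - ustar (k + 1))
          ≤ α * _root_.enorm (u k - ustar k)
            + η * (LTy * spec C / Real.sqrt (eigMin P)) * pnorm P (x k - xss k)
            + η * LTy * spec (H - Hhat) * _root_.enorm (u k)
            + _root_.enorm (ustar (k + 1) - ustar k) := by
  have hM : (R + lam • (Hhatᵀ * Q * Hhat)).PosSemidef := by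
    simpa using hR.add ((hQ.conjTranspose_mul_mul_same Hhat).smul hlam)
  have hRs : Rᵀ = R := (isHermitian_iff_isSymm.mp hR.isHermitian).eq
  have hQs : Qᵀ = Q := (isHermitian_iff_isSymm.mp hQ.isHermitian).eq
  have hαeq : √(1 - 2 * (2 * η) * eigMin (R + lam • (Hhatᵀ * Q * Hhat))
      + (2 * η) ^ 2 * eigMax (R + lam • (Hhatᵀ * Q * Hhat)) ^ 2) = α := by
    rw [hα, hμ, hL]; ring_nf
  refine ⟨⟨hα ▸ Real.sqrt_nonneg _, hα ▸ sqrt_one_sub_mul_lt_one hη hηrange⟩, fun k => ?_⟩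
  set d := C *ᵥ ((1 - A)⁻¹ *ᵥ dx k) + dy k
  have hfix := eq_softThreshold_of_forall_le hη hρcol (Phi1_add hRs hQs lam ρcol Hhat d (r k) _)
    fun v => (eq_or_ne v (ustar k)).elim (fun h => h ▸ le_rfl) fun h => (hustar k v h).le
  have hstep := enorm_proxGrad_sub_le hM hlam hη.le hρcol (u k) (ustar k) (y k) d (r k)
  rw [← hctrl k, ← hfix, hαeq, ← hLTy] at hstep
  have herr := output_sub_prediction_eq (Hhat := Hhat) hH (hxss k) (hout k)
  have hLTy₀ : 0 ≤ LTy := hLTy ▸ mul_nonneg (by positivity) (norm_nonneg _)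
  calc _ ≤ _root_.enorm (u (k + 1) - ustar k) + _root_.enorm (ustar (k + 1) - ustar k) := by
        simpa only [enorm_eq_norm_toLp, WithLp.toLp_sub, ← dist_eq_norm]
          using dist_triangle_right _ _ _
    _ ≤ α * _root_.enorm (u k - ustar k)
          + η * LTy * _root_.enorm (C *ᵥ (x k - xss k) + (H - Hhat) *ᵥ u k)
          + _root_.enorm (ustar (k + 1) - ustar k) := by rw [← herr]; gcongr
    _ ≤ α * _root_.enorm (u k - ustar k) + η * LTy * (spec C * (pnorm P (x k - xss k) /
          √(eigMin P)) + spec (H - Hhat) * _root_.enorm (u k))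
          + _root_.enorm (ustar (k + 1) - ustar k) := by
        gcongr; exact enorm_mulVec_add_mulVec_le hP _ _ _ _
    _ = _ := by ring

/-- Lemma 2 of the paper for the ℓ1-controller (12). -/
theorem stmt12 {n m p : ℕ}
    (A : Matrix (Fin n) (Fin n) ℝ) (B : Matrix (Fin n) (Fin m) ℝ) (C : Matrix (Fin p) (Fin n) ℝ)
    (hA : spectralRadius ℂ (A.map Complex.ofReal) < 1)
    (Qbar P : Matrix (Fin n) (Fin n) ℝ) (hQbar : Qbar.PosDef) (hP : P.PosDef)
    (hLyap : Aᵀ * P * A - P + Qbar = 0)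
    (R : Matrix (Fin m) (Fin m) ℝ) (Q : Matrix (Fin p) (Fin p) ℝ)
    (hR : R.PosSemidef) (hQ : Q.PosSemidef)
    (lam : ℝ) (hlam : 0 ≤ lam) (Hhat : Matrix (Fin p) (Fin m) ℝ)
    (hS : ((2 : ℝ) • (R + lam • (Hhatᵀ * Q * Hhat))).PosDef)
    (μ L : ℝ)
    (hμ : μ = 2 * eigMin (R + lam • (Hhatᵀ * Q * Hhat)))
    (hμpos : 0 < μ)
    (hL : L = 2 * eigMax (R + lam • (Hhatᵀ * Q * Hhat)))
    (r : ℕ → Fin p → ℝ) (η : ℝ) (hη : 0 < η) (hηrange : η < 2 * μ / L ^ 2)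
    (ρcol : Fin m → ℝ) (hρcol : ∀ i, 0 ≤ ρcol i)
    (dx : ℕ → Fin n → ℝ) (dy : ℕ → Fin p → ℝ)
    (x : ℕ → Fin n → ℝ) (u : ℕ → Fin m → ℝ) (y : ℕ → Fin p → ℝ)
    (hdyn : ∀ k, x (k + 1) = A *ᵥ x k + B *ᵥ u k + dx k)
    (hout : ∀ k, y k = C *ᵥ x k + dy k)
    (hctrl : ∀ k, u (k + 1) =
      softThreshold η ρcol (u k - (2 * η) • (R *ᵥ u k + lam • (Hhatᵀ *ᵥ (Q *ᵥ (y k - r k))))))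
    (ustar : ℕ → Fin m → ℝ)
    (hustar : ∀ k, ∀ v : Fin m → ℝ, v ≠ ustar k →
      Phi1 R Q lam ρcol Hhat (C *ᵥ ((1 - A)⁻¹ *ᵥ dx k) + dy k) (r k) (ustar k)
        < Phi1 R Q lam ρcol Hhat (C *ᵥ ((1 - A)⁻¹ *ᵥ dx k) + dy k) (r k) v)
    (H : Matrix (Fin p) (Fin m) ℝ) (hH : H = C * (1 - A)⁻¹ * B)
    (xss : ℕ → Fin n → ℝ) (hxss : ∀ k, xss k = (1 - A)⁻¹ *ᵥ (B *ᵥ u k + dx k))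
    (α LTy : ℝ)
    (hα : α = Real.sqrt (1 - η * (2 * μ - η * L ^ 2)))
    (hLTy : LTy = 2 * lam * spec (Hhatᵀ * Q)) :
    (0 ≤ α ∧ α < 1) ∧
      ∀ k : ℕ,
        _root_.enorm (u (k + 1) - ustar (k + 1))
          ≤ α * _root_.enorm (u k - ustar k)
            + η * (LTy * spec C / Real.sqrt (eigMin P)) * pnorm P (x k - xss k)
            + η * LTy * spec (H - Hhat) * _root_.enorm (u k)
            + _root_.enorm (ustar (k + 1) - ustar k) :=
  stmt12_general A B C P hP R Q hR hQ lam hlam Hhat μ L hμ hL r η hη hηrange ρcol hρcol dx dy x u y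
    hout hctrl ustar hustar H hH xss hxss α LTy hα hLTy
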